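/- The number of n-qubit stabilizer states is C(n) = 2^n · ∏_{k=1}^{n} (2^k + 1). -/

import Mathlib

/-!
Counting linearly independent `k`-tuples in `𝔽₂ⁿ` in two ways (directly, and as a choice of
their span followed by an ordered basis of it) gives
`binom(n,k)₂ · ∏_{i<k} (2^k - 2^i) = ∏_{i<k} (2^n - 2^i)`, from which the `2`-Pascal rule
`binom(n+1,k+1)₂ = 2^(k+1) binom(n,k+1)₂ + binom(n,k)₂` follows. By induction on `n` this yields
the `2`-binomial theorem `∑_k 2^(k choose 2) binom(n,k)₂ t^k = ∏_{j<n} (1 + 2^j t)`, and the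
count is its value at `t = 2`.
-/

/-- The number of `k`-dimensional linear subspaces of `F_2^n`
    (the Gaussian binomial coefficient `binom(n,k)_2`). -/
noncomputable def gaussBinom2 (n k : ℕ) : ℕ :=
  Nat.card {V : Submodule (ZMod 2) (Fin n → ZMod 2) // Module.finrank (ZMod 2) V = k}

open Finset Module Submodule

def linIndepCount (q : ℤ) (m k : ℕ) : ℤ := ∏ i ∈ range k, (q ^ m - q ^ i)

theorem linIndepCount_succ_right (q : ℤ) (m k : ℕ) :
    linIndepCount q m (k + 1) = linIndepCount q m k * (q ^ m - q ^ k) :=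
  prod_range_succ _ _

theorem linIndepCount_succ_succ (q : ℤ) (m k : ℕ) :
    linIndepCount q (m + 1) (k + 1) = (q ^ (m + 1) - 1) * q ^ k * linIndepCount q m k := by
  have h : ∀ i ∈ range k, q ^ (m + 1) - q ^ (i + 1) = q * (q ^ m - q ^ i) := fun _ _ => by ring
  rw [linIndepCount, prod_range_succ', prod_congr rfl h, prod_mul_distrib, prod_const, card_range,
    pow_zero, linIndepCount]
  ring

theorem linIndepCount_eq_zero {q : ℤ} {m k : ℕ} (h : m < k) : linIndepCount q m k = 0 :=
  prod_eq_zero (mem_range.2 h) (sub_self _)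

theorem linIndepCount_ne_zero {q : ℤ} (hq : 1 < q) {m k : ℕ} (hk : k ≤ m) :
    linIndepCount q m k ≠ 0 :=
  prod_ne_zero_iff.2 fun _ hi => sub_ne_zero.2 <|
    (pow_lt_pow_right₀ hq (lt_of_lt_of_le (mem_range.1 hi) hk)).ne'

section LinearIndependent

variable {K V : Type*} [DivisionRing K] [Fintype K] [AddCommGroup V] [Module K V] [Finite V]

theorem natCast_card_linearIndependent (k : ℕ) :
    (Nat.card {s : Fin k → V // LinearIndependent K s} : ℤ) =
      linIndepCount (Fintype.card K) (finrank K V) k := by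
  by_cases hk : k ≤ finrank K V
  · rw [card_linearIndependent hk, Nat.cast_prod, Fin.prod_univ_eq_prod_range
      (fun i => ((Fintype.card K ^ finrank K V - Fintype.card K ^ i : ℕ) : ℤ))]
    refine prod_congr rfl fun i hi => ?_
    rw [Nat.cast_sub (pow_le_pow_right₀ Fintype.card_pos (mem_range.1 hi |>.le.trans hk))]
    push_cast
    rfl
  · rw [linIndepCount_eq_zero (not_le.1 hk), Nat.cast_eq_zero, Nat.card_eq_zero]
    exact .inl ⟨fun ⟨s, hs⟩ => hk (by simpa using hs.fintype_card_le_finrank)⟩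

variable (K V) in
def spanOfLinearIndependent (k : ℕ) (s : {s : Fin k → V // LinearIndependent K s}) :
    {W : Submodule K V // finrank K W = k} :=
  ⟨span K (Set.range s.1), by rw [finrank_span_eq_card s.2, Fintype.card_fin]⟩

def spanOfLinearIndependentFiberEquiv {k : ℕ} (W : {W : Submodule K V // finrank K W = k}) :
    {s // spanOfLinearIndependent K V k s = W} ≃ {t : Fin k → W.1 // LinearIndependent K t} where
  toFun s := ⟨fun i => ⟨s.1.1 i, congrArg Subtype.val s.2 ▸ subset_span (Set.mem_range_self i)⟩,
    .of_comp W.1.subtype s.1.2⟩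
  invFun t := ⟨⟨fun i => t.1 i, t.2.map' W.1.subtype (ker_subtype _)⟩, by
    have htop : span K (Set.range t.1) = ⊤ :=
      t.2.span_eq_top_of_card_eq_finrank' (by rw [Fintype.card_fin, W.2])
    refine Subtype.ext ?_
    change span K (Set.range (W.1.subtype ∘ t.1)) = W.1
    rw [Set.range_comp, span_image, htop, Submodule.map_top, range_subtype]⟩
  left_inv _ := rfl
  right_inv _ := rfl

theorem natCast_card_linearIndependent_eq_card_mul (k : ℕ) :
    (Nat.card {s : Fin k → V // LinearIndependent K s} : ℤ) =
      Nat.card {W : Submodule K V // finrank K W = k} * linIndepCount (Fintype.card K) k k := by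
  have hfiber : ∀ W, (Nat.card {s // spanOfLinearIndependent K V k s = W} : ℤ) =
      linIndepCount (Fintype.card K) k k := fun W => by
    rw [Nat.card_congr (spanOfLinearIndependentFiberEquiv W), natCast_card_linearIndependent, W.2]
  have := Fintype.ofFinite {W : Submodule K V // finrank K W = k}
  rw [← Nat.card_congr (Equiv.sigmaFiberEquiv (spanOfLinearIndependent K V k)), Nat.card_sigma,
    Nat.cast_sum, sum_congr rfl fun W _ => hfiber W, sum_const, card_univ, nsmul_eq_mul,
    Nat.card_eq_fintype_card]

end LinearIndependent

theorem gaussBinom2_mul_linIndepCount (n k : ℕ) :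
    (gaussBinom2 n k : ℤ) * linIndepCount 2 k k = linIndepCount 2 n k := by
  have h := natCast_card_linearIndependent_eq_card_mul (K := ZMod 2) (V := Fin n → ZMod 2) k
  rw [natCast_card_linearIndependent, ZMod.card, finrank_fin_fun] at h
  exact_mod_cast h.symm

theorem gaussBinom2_zero_right (n : ℕ) : gaussBinom2 n 0 = 1 := by
  simpa [linIndepCount] using gaussBinom2_mul_linIndepCount n 0

theorem gaussBinom2_eq_zero_of_lt {n k : ℕ} (h : n < k) : gaussBinom2 n k = 0 := by
  have hG := gaussBinom2_mul_linIndepCount n k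
  rw [linIndepCount_eq_zero h, mul_eq_zero] at hG
  exact_mod_cast hG.resolve_right (linIndepCount_ne_zero one_lt_two le_rfl)

theorem gaussBinom2_succ_succ (n k : ℕ) :
    gaussBinom2 (n + 1) (k + 1) = 2 ^ (k + 1) * gaussBinom2 n (k + 1) + gaussBinom2 n k := by
  zify
  refine mul_right_cancel₀ (linIndepCount_ne_zero (m := k + 1) one_lt_two le_rfl) ?_
  rw [add_mul, mul_assoc, gaussBinom2_mul_linIndepCount, gaussBinom2_mul_linIndepCount,
    linIndepCount_succ_succ, linIndepCount_succ_succ, linIndepCount_succ_right]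
  linear_combination (-(2 : ℤ) ^ (k + 1) + 1) * 2 ^ k * gaussBinom2_mul_linIndepCount n k

theorem sum_gaussBinom2_mul_pow {R : Type*} [CommSemiring R] (n : ℕ) (t : R) :
    ∑ k ∈ range (n + 1), 2 ^ k.choose 2 * (gaussBinom2 n k : R) * t ^ k =
      ∏ j ∈ range n, (1 + 2 ^ j * t) := by
  induction n generalizing t with
  | zero => simp [gaussBinom2_zero_right]
  | succ n ih =>
    -- splitting off the factor `j = 0` leaves the product of the induction hypothesis at `2 * t`
    set f : ℕ → R := fun k => 2 ^ k.choose 2 * (gaussBinom2 n k : R) * (2 * t) ^ k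
    have hterm : ∀ k ∈ range (n + 1),
        2 ^ (k + 1).choose 2 * (gaussBinom2 (n + 1) (k + 1) : R) * t ^ (k + 1) =
          f (k + 1) + t * f k := fun k _ => by
      simp only [f, gaussBinom2_succ_succ, Nat.choose_succ_succ' k 1, Nat.choose_one_right]
      push_cast
      ring
    have hfirst : f 0 = 1 := by simp [f, gaussBinom2_zero_right]
    have hlast : f (n + 1) = 0 := by simp [f, gaussBinom2_eq_zero_of_lt n.lt_add_one]
    calc ∑ k ∈ range (n + 1 + 1), 2 ^ k.choose 2 * (gaussBinom2 (n + 1) k : R) * t ^ k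
        = ∑ k ∈ range (n + 1), (f (k + 1) + t * f k) + 1 := by
          rw [sum_range_succ', sum_congr rfl hterm]
          simp [gaussBinom2_zero_right]
      _ = (∑ k ∈ range (n + 1 + 1), f k) + t * ∑ k ∈ range (n + 1), f k := by
          rw [sum_range_succ' f, sum_add_distrib, mul_sum, hfirst]
          ring
      _ = (1 + t) * ∑ k ∈ range (n + 1), f k := by
          rw [sum_range_succ, hlast, add_zero]
          ring
      _ = ∏ j ∈ range (n + 1), (1 + 2 ^ j * t) := by
          rw [ih, prod_range_succ', pow_zero, one_mul, mul_comm]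
          exact congrArg (· * _) (prod_congr rfl fun j _ => by ring)

/-- The number of `n`-qubit stabilizer states, written combinatorially as
    `∑_{k=0}^{n} C(n,k)` with `C(n,k) = 2^{n + k(k+1)/2} · binom(n,k)_2`,
    equals `C(n) = 2^n · ∏_{k=1}^{n} (2^k + 1)`. -/
theorem stabilizer_state_count (n : ℕ) :
    ∑ k ∈ Finset.range (n + 1), 2 ^ (n + k * (k + 1) / 2) * gaussBinom2 n k
      = 2 ^ n * ∏ k ∈ Finset.Icc 1 n, (2 ^ k + 1) := by
  have hexp : ∀ k : ℕ, k * (k + 1) / 2 = k.choose 2 + k := fun k => by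
    have h : (k + 1).choose 2 = k.choose 1 + k.choose 2 := Nat.choose_succ_succ' k 1
    rw [Nat.choose_two_right, Nat.add_sub_cancel, Nat.choose_one_right] at h
    rw [mul_comm, h, add_comm]
  have hprod : ∏ j ∈ range n, (1 + 2 ^ j * 2) = ∏ k ∈ Icc 1 n, (2 ^ k + 1) := by
    rw [← Ico_add_one_right_eq_Icc, prod_Ico_eq_prod_range, Nat.add_sub_cancel]
    exact prod_congr rfl fun j _ => by ring
  simp_rw [hexp, pow_add, ← hprod, ← sum_gaussBinom2_mul_pow, mul_sum, Nat.cast_id]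
  exact sum_congr rfl fun k _ => by ring
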